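/- arXiv:1707.05412 — 7 statements merged into one kernel-verified Lean document; each statement's English description precedes it below -/
import Mathlib

section
/- Let γ : ℕ → ℂ with associated polynomials P_n(x) = Σ_{k=0}^n (γ_k/k!) D^k[x^n] for n ≥ 0. Then {P_n}_{n=0}^∞ is an orthogonal polynomial sequence if and only if there exist α, β, γ_0' ∈ ℂ with α ≠ 0 and γ_0' ≠ 0 such that for every k ≥ 0, γ_k equals the k-th derivative at 0 of the entire function z ↦ γ_0' · exp(−(α/2)z² − βz) (in particular γ_0 = γ_0'). -/
/-!
`P n = ∑ j, (n.choose j) γ (n - j) X ^ j` is the Appell sequence of `∑ γ k t ^ k / k!`, and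
`P (n + 1) - X * P n` is the Appell sequence of the shifted coefficients. All `P n` have leading
coefficient `γ 0`, so if they are orthogonal the classical three-term recurrence
`P (n + 2) - X * P (n + 1) = b • P (n + 1) - λ • P n` with `λ ≠ 0` holds; comparing the
coefficients of `X ^ (n + 1)`, `X ^ n` and `X ^ 0` forces `b = -β` constant, `λ = (n + 1) α`, and
`γ (n + 2) = -β γ (n + 1) - (n + 1) α γ n`. This is exactly the recurrence satisfied by the
derivatives at `0` of `f z = γ 0 * exp (-(α / 2) z ^ 2 - β z)`, since `f' = (-β - α z) f`.
Conversely, that recurrence gives `X * P n = P (n + 1) + β P n + α n P (n - 1)`, and Favard's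
theorem produces the orthogonality functional.
-/

open Polynomial Finset
open scoped ContDiff

theorem iteratedDeriv_succ_of_deriv_eq_affine_mul {𝕜 : Type*} [NontriviallyNormedField 𝕜]
    {f : 𝕜 → 𝕜} (hf : ContDiff 𝕜 ∞ f) {a b : 𝕜} (hderiv : deriv f = fun z => (a + b * z) * f z)
    (k : ℕ) (x : 𝕜) :
    iteratedDeriv (k + 1) f x
      = (a + b * x) * iteratedDeriv k f x + b * k * iteratedDeriv (k - 1) f x := by
  have hid : ContDiffAt 𝕜 k (fun z : 𝕜 => z) x := contDiffAt_id
  have hfk : ContDiffAt 𝕜 k f x := hf.contDiffAt.of_le (by exact_mod_cast le_top)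
  have hleibniz : iteratedDeriv k (fun z => z * f z) x
      = x * iteratedDeriv k f x + k * iteratedDeriv (k - 1) f x := by
    rw [iteratedDeriv_fun_mul hid hfk]
    rcases k with _ | k
    · simp
    · simp [sum_range_succ', iteratedDeriv_fun_id]
      ring
  have hsplit : (fun z => (a + b * z) * f z) = fun z => a * f z + b * (z * f z) := by
    ext z; ring
  rw [iteratedDeriv_succ', hderiv, hsplit, iteratedDeriv_fun_add (contDiffAt_const.mul hfk)
    (contDiffAt_const.mul (hid.mul hfk)), iteratedDeriv_const_mul_field,
    iteratedDeriv_const_mul_field, hleibniz]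
  ring

theorem eq_iteratedDeriv_gaussian_iff (γ : ℕ → ℂ) (α β c : ℂ) :
    (∀ k, γ k = iteratedDeriv k (fun z : ℂ => c * Complex.exp (-(α / 2) * z ^ 2 - β * z)) 0) ↔
      γ 0 = c ∧ ∀ k, γ (k + 1) = -β * γ k - α * k * γ (k - 1) := by
  set f : ℂ → ℂ := fun z => c * Complex.exp (-(α / 2) * z ^ 2 - β * z)
  have hf : ContDiff ℂ ∞ f := by fun_prop
  have hderiv : deriv f = fun z => (-β + -α * z) * f z := by
    ext z
    have : HasDerivAt f (c * (Complex.exp (-(α / 2) * z ^ 2 - β * z) *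
        (-(α / 2) * (2 * z ^ 1) - β * 1))) z :=
      (((hasDerivAt_pow 2 z).const_mul _).sub ((hasDerivAt_id z).const_mul β)).cexp.const_mul c
    rw [this.deriv]
    ring
  have hrec (k : ℕ) : iteratedDeriv (k + 1) f 0
      = -β * iteratedDeriv k f 0 - α * k * iteratedDeriv (k - 1) f 0 := by
    rw [iteratedDeriv_succ_of_deriv_eq_affine_mul hf hderiv]
    ring
  constructor
  · intro h
    refine ⟨by simp [h 0, f], fun k => ?_⟩
    rw [h, h, h, hrec]
  · rintro ⟨h0, h⟩ k
    induction k using Nat.strong_induction_on with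
    | _ k ih =>
      rcases k with _ | k
      · simp [h0, f]
      · rw [h, hrec, ih k (by omega), ih (k - 1) (by omega)]

theorem Nat.sub_mul_choose (n j : ℕ) : (n - j) * n.choose j = n * (n - 1).choose j := by
  rcases n with _ | m
  · simp
  · rw [mul_comm, ← Nat.choose_mul_succ_eq, add_tsub_cancel_right, mul_comm]

noncomputable def appell {R : Type*} [Semiring R] (γ : ℕ → R) (n : ℕ) : R[X] :=
  ∑ j ∈ range (n + 1), C (γ (n - j) * n.choose j) * X ^ j

section Appell

variable {R : Type*} [CommRing R] (γ : ℕ → R)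

theorem coeff_appell (n j : ℕ) : (appell γ n).coeff j = γ (n - j) * n.choose j := by
  simp only [appell, finsetSum_coeff, coeff_C_mul_X_pow, sum_ite_eq, mem_range]
  split_ifs with h
  · rfl
  · rw [Nat.choose_eq_zero_of_lt (by omega), Nat.cast_zero, mul_zero]

@[simp]
theorem coeff_appell_zero (n : ℕ) : (appell γ n).coeff 0 = γ n := by
  simp [coeff_appell]

@[simp]
theorem coeff_appell_self (n : ℕ) : (appell γ n).coeff n = γ 0 := by
  simp [coeff_appell]

@[simp]
theorem appell_zero : appell γ 0 = C (γ 0) := by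
  simp [appell]

theorem natDegree_appell_le (n : ℕ) : (appell γ n).natDegree ≤ n :=
  natDegree_le_iff_coeff_eq_zero.2 fun j hj => by
    rw [coeff_appell, Nat.choose_eq_zero_of_lt (by exact_mod_cast hj), Nat.cast_zero, mul_zero]

theorem degree_appell {γ : ℕ → R} (hγ : γ 0 ≠ 0) (n : ℕ) : (appell γ n).degree = n :=
  degree_eq_of_le_of_coeff_ne_zero
    (degree_le_natDegree.trans (by exact_mod_cast natDegree_appell_le γ n)) (by simpa using hγ)

theorem appell_succ (n : ℕ) :
    appell γ (n + 1) = X * appell γ n + appell (fun k => γ (k + 1)) n := by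
  ext (_ | j)
  · simp
  · rw [coeff_add, coeff_X_mul, coeff_appell, coeff_appell, coeff_appell, Nat.choose_succ_succ',
      Nat.cast_add]
    rcases lt_or_ge j n with hj | hj
    · rw [show n - (j + 1) + 1 = n - j by omega, Nat.add_sub_add_right]
      ring
    · rw [Nat.choose_eq_zero_of_lt (by omega : n < j + 1)]
      simp

theorem appell_eq_sum_iterate_derivative {K : Type*} [Field K] [CharZero K] (γ : ℕ → K) (n : ℕ) :
    appell γ n = ∑ k ∈ range (n + 1), C (γ k / (k.factorial : K)) * derivative^[k] (X ^ n) := by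
  rw [appell, ← sum_range_reflect]
  refine sum_congr rfl fun k hk => ?_
  have hk : k ≤ n := Nat.lt_succ_iff.1 (mem_range.1 hk)
  rw [iterate_derivative_X_pow_eq_C_mul, ← mul_assoc, ← C_mul, add_tsub_cancel_right,
    Nat.sub_sub_self hk, Nat.choose_symm hk, Nat.descFactorial_eq_factorial_mul_choose,
    Nat.cast_mul]
  have : (k.factorial : K) ≠ 0 := Nat.cast_ne_zero.2 k.factorial_ne_zero
  congr 2
  field_simp

theorem X_mul_appell {γ : ℕ → R} {α β : R}
    (hrec : ∀ k, γ (k + 1) = -β * γ k - α * k * γ (k - 1)) (n : ℕ) :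
    X * appell γ n = appell γ (n + 1) + C β * appell γ n + C (α * n) * appell γ (n - 1) := by
  suffices appell (fun k => γ (k + 1)) n = -(C β * appell γ n) - C (α * n) * appell γ (n - 1) by
    rw [appell_succ, this]; ring
  ext j
  simp only [coeff_sub, coeff_neg, coeff_C_mul, coeff_appell, hrec]
  have hcast : ((n - j : ℕ) : R) * n.choose j = n * (n - 1).choose j := by
    simpa only [Nat.cast_mul] using congrArg (Nat.cast (R := R)) (Nat.sub_mul_choose n j)
  rw [show n - j - 1 = n - 1 - j by omega]
  linear_combination (-α * γ (n - 1 - j)) * hcast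

end Appell

structure IsOrthogonalSeq {K : Type*} [Field K] (L : K[X] →ₗ[K] K) (P : ℕ → K[X]) : Prop where
  degree_eq : ∀ n, (P n).degree = n
  map_mul_eq_zero : ∀ m n, m ≠ n → L (P m * P n) = 0
  map_sq_ne_zero : ∀ n, L (P n ^ 2) ≠ 0

section Orthogonal

variable {K : Type*} [Field K]

theorem exists_eq_sum_smul_of_degree_lt {P : ℕ → K[X]} (hP : ∀ n, (P n).degree = n)
    {q : K[X]} {n : ℕ} (hq : q.degree < n) : ∃ c : ℕ → K, ∑ k ∈ range n, c k • P k = q := by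
  let S : Sequence K := ⟨P, hP⟩
  have hspan := S.span_degreeLT (m := n) fun i _ => (leadingCoeff_ne_zero.2 (S.ne_zero i)).isUnit
  rw [← coe_range] at hspan
  exact (Submodule.mem_span_image_finset_iff_exists_fun' K).1 (hspan ▸ mem_degreeLT.2 hq)

namespace IsOrthogonalSeq

variable {L : K[X] →ₗ[K] K} {P : ℕ → K[X]} (h : IsOrthogonalSeq L P)
include h

theorem map_sum_smul_mul {n k : ℕ} (hk : k < n) (c : ℕ → K) :
    L ((∑ j ∈ range n, c j • P j) * P k) = c k * L (P k ^ 2) := by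
  simp only [sum_mul, map_sum, smul_mul_assoc, map_smul, smul_eq_mul]
  rw [sum_eq_single_of_mem k (mem_range.2 hk) fun j _ hjk => by
    rw [h.map_mul_eq_zero j k hjk, mul_zero], sq]

theorem eq_sum_of_degree_lt {q : K[X]} {n : ℕ} (hq : q.degree < n) :
    q = ∑ k ∈ range n, (L (q * P k) / L (P k ^ 2)) • P k := by
  obtain ⟨c, rfl⟩ := exists_eq_sum_smul_of_degree_lt h.degree_eq hq
  refine sum_congr rfl fun k hk => ?_
  rw [h.map_sum_smul_mul (mem_range.1 hk), mul_div_cancel_right₀ _ (h.map_sq_ne_zero k)]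

theorem map_mul_eq_zero_of_degree_lt {q : K[X]} {n : ℕ} (hq : q.degree < n) :
    L (q * P n) = 0 := by
  obtain ⟨c, rfl⟩ := exists_eq_sum_smul_of_degree_lt h.degree_eq hq
  simp only [sum_mul, map_sum, smul_mul_assoc, map_smul, smul_eq_mul]
  exact sum_eq_zero fun k hk => by rw [h.map_mul_eq_zero k n (mem_range.1 hk).ne, mul_zero]

theorem degree_X_mul (n : ℕ) : (X * P n).degree = ((n + 1 : ℕ) : WithBot ℕ) := by
  rw [degree_mul, degree_X, h.degree_eq, Nat.cast_succ, add_comm]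

/-- The classical three-term recurrence, normalised by equal leading coefficients. -/
theorem exists_sub_X_mul_eq (hlc : ∀ n, (P (n + 1)).leadingCoeff = (P n).leadingCoeff) (n : ℕ) :
    ∃ b : K, P (n + 2) - X * P (n + 1)
      = b • P (n + 1) - (L (P (n + 1) ^ 2) / L (P n ^ 2)) • P n := by
  have hdeg (m : ℕ) : (P (m + 1) - X * P m).degree < ((m + 1 : ℕ) : WithBot ℕ) := by
    have := degree_sub_lt_left ((h.degree_eq _).trans (h.degree_X_mul m).symm)
      (ne_zero_of_coe_le_degree (h.degree_eq _).ge)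
      (by rw [leadingCoeff_mul, leadingCoeff_X, one_mul, hlc])
    rwa [h.degree_eq] at this
  have hlow (k : ℕ) (hk : k < n) : L ((P (n + 2) - X * P (n + 1)) * P k) = 0 := by
    rw [sub_mul, show X * P (n + 1) * P k = X * P k * P (n + 1) by ring, map_sub,
      h.map_mul_eq_zero _ _ (by omega), h.map_mul_eq_zero_of_degree_lt
        ((h.degree_X_mul k).trans_lt (by exact_mod_cast Nat.succ_lt_succ hk)), sub_zero]
  have hdiag : L ((P (n + 2) - X * P (n + 1)) * P n) = -L (P (n + 1) ^ 2) := by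
    have hX : X * P n = P (n + 1) - (P (n + 1) - X * P n) := by ring
    rw [sub_mul, mul_assoc, mul_left_comm, hX, map_sub, h.map_mul_eq_zero _ _ (by omega), mul_sub,
      map_sub, mul_comm (P (n + 1)) (P (n + 1) - _), h.map_mul_eq_zero_of_degree_lt (hdeg n), sq]
    ring
  refine ⟨L ((P (n + 2) - X * P (n + 1)) * P (n + 1)) / L (P (n + 1) ^ 2), ?_⟩
  conv_lhs => rw [h.eq_sum_of_degree_lt (hdeg (n + 1))]
  rw [sum_range_succ, sum_range_succ,
    sum_eq_zero fun k hk => by rw [hlow k (mem_range.1 hk), zero_div, zero_smul],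
    hdiag, neg_div, neg_smul]
  abel

end IsOrthogonalSeq

theorem map_mul_eq_coeff_mul {R : Type*} [CommRing R] {L : R[X] →ₗ[R] R} {p q : R[X]} {n : ℕ}
    (hq : q.natDegree ≤ n) (hp : ∀ j < n, L (X ^ j * p) = 0) :
    L (q * p) = q.coeff n * L (X ^ n * p) := by
  conv_lhs => rw [as_sum_range_C_mul_X_pow' q (Nat.lt_succ_of_le hq)]
  simp only [sum_mul, map_sum, ← smul_eq_C_mul, smul_mul_assoc, map_smul, smul_eq_mul]
  rw [sum_range_succ, sum_eq_zero fun j hj => by rw [hp j (mem_range.1 hj), mul_zero], zero_add]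

section Favard

variable {P : ℕ → K[X]} {b c : ℕ → K}
  (hrec : ∀ n, X * P n = P (n + 1) + C (b n) * P n + C (c n) * P (n - 1))
  {L : K[X] →ₗ[K] K} (hL : ∀ n, L (P n) = if n = 0 then 1 else 0)
include hrec hL

theorem map_X_pow_mul_eq_zero_of_lt {m n : ℕ} (hmn : m < n) : L (X ^ m * P n) = 0 := by
  induction m generalizing n with
  | zero => simp [hL, Nat.ne_zero_of_lt hmn]
  | succ m ih =>
    rw [pow_succ, mul_assoc, hrec, mul_add, mul_add, mul_left_comm, mul_left_comm _ (C (c n)),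
      map_add, map_add, ← smul_eq_C_mul, ← smul_eq_C_mul, map_smul, map_smul, ih (by omega),
      ih (by omega), ih (by omega)]
    simp

theorem map_X_pow_mul_self (n : ℕ) : L (X ^ n * P n) = ∏ k ∈ range n, c (k + 1) := by
  induction n with
  | zero => simp [hL]
  | succ n ih =>
    rw [pow_succ, mul_assoc, hrec, mul_add, mul_add, mul_left_comm, mul_left_comm _ (C (c _)),
      map_add, map_add, ← smul_eq_C_mul, ← smul_eq_C_mul, map_smul, map_smul,
      map_X_pow_mul_eq_zero_of_lt hrec hL (by omega),
      map_X_pow_mul_eq_zero_of_lt hrec hL (by omega), add_tsub_cancel_right, ih, prod_range_succ]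
    simp [mul_comm]

end Favard

/-- Favard's theorem; the functional is the coordinate of `P 0` in the basis `P`.
Since `P (0 - 1) = P 0`, the value `c 0` only enters through `b 0 + c 0`. -/
theorem exists_isOrthogonalSeq_of_X_mul_eq {P : ℕ → K[X]} (hP : ∀ n, (P n).degree = n)
    {b c : ℕ → K} (hc : ∀ n, c (n + 1) ≠ 0)
    (hrec : ∀ n, X * P n = P (n + 1) + C (b n) * P n + C (c n) * P (n - 1)) :
    ∃ L : K[X] →ₗ[K] K, IsOrthogonalSeq L P := by
  let S : Sequence K := ⟨P, hP⟩
  let B := S.basis fun i => (leadingCoeff_ne_zero.2 (S.ne_zero i)).isUnit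
  have hL (n : ℕ) : B.coord 0 (P n) = if n = 0 then 1 else 0 := by
    rw [show P n = B n from (S.basis_eq_self _ n).symm, B.coord_apply, B.repr_self,
      Finsupp.single_apply, eq_comm]
  have hnat (n : ℕ) : (P n).natDegree = n := S.natDegree_eq n
  refine ⟨B.coord 0, hP, fun m n hmn => ?_, fun n => ?_⟩
  · wlog h : m < n generalizing m n
    · rw [mul_comm]; exact this n m hmn.symm (by omega)
    rw [map_mul_eq_coeff_mul ((hnat m).trans_le h.le)
      fun j hj => map_X_pow_mul_eq_zero_of_lt hrec hL hj,
      coeff_eq_zero_of_natDegree_lt ((hnat m).trans_lt h), zero_mul]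
  · rw [sq, map_mul_eq_coeff_mul (hnat n).le fun j hj => map_X_pow_mul_eq_zero_of_lt hrec hL hj,
      map_X_pow_mul_self hrec hL]
    refine mul_ne_zero ?_ (prod_ne_zero_iff.2 fun k _ => hc k)
    have := leadingCoeff_ne_zero.2 (S.ne_zero n)
    rwa [leadingCoeff, hnat] at this

end Orthogonal

section Hermite

variable {K : Type*} [Field K] {γ : ℕ → K}

theorem appell_shift_coeff_relations (hγ : γ 0 ≠ 0) {b c : K} {n : ℕ}
    (h : appell (fun k => γ (k + 1)) (n + 1) = b • appell γ (n + 1) - c • appell γ n) :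
    b = γ 1 / γ 0 ∧ c = (n + 1) * ((γ 1 ^ 2 - γ 0 * γ 2) / γ 0 ^ 2) ∧
      γ (n + 2) = b * γ (n + 1) - c * γ n := by
  have hcoeff (j : ℕ) := congrArg (coeff · j) h
  have hlead : γ 1 = b * γ 0 := by simpa [coeff_appell] using hcoeff (n + 1)
  have hsub : γ 2 * (n + 1) = b * (γ 1 * (n + 1)) - c * γ 0 := by
    simpa [coeff_appell, Nat.choose_succ_self_right] using hcoeff n
  have hconst : γ (n + 2) = b * γ (n + 1) - c * γ n := by simpa using hcoeff 0
  have hc : c * γ 0 ^ 2 = (n + 1) * (γ 1 ^ 2 - γ 0 * γ 2) := by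
    linear_combination γ 0 * hsub - (γ 1 * (n + 1)) * hlead
  refine ⟨by rw [hlead, mul_div_cancel_right₀ _ hγ], ?_, hconst⟩
  rw [mul_div_assoc', eq_div_iff (pow_ne_zero 2 hγ), hc]

theorem IsOrthogonalSeq.exists_hermite_recurrence {L : K[X] →ₗ[K] K}
    (h : IsOrthogonalSeq L (appell γ)) :
    γ 0 ≠ 0 ∧ ∃ α β : K, α ≠ 0 ∧ ∀ k, γ (k + 1) = -β * γ k - α * k * γ (k - 1) := by
  have hγ : γ 0 ≠ 0 := fun h0 => by simpa [h0] using h.degree_eq 0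
  have hlc (n : ℕ) : (appell γ n).leadingCoeff = γ 0 := by
    rw [leadingCoeff, natDegree_eq_of_degree_eq_some (h.degree_eq n), coeff_appell_self]
  set α := (γ 1 ^ 2 - γ 0 * γ 2) / γ 0 ^ 2
  have hstep (n : ℕ) : L (appell γ (n + 1) ^ 2) / L (appell γ n ^ 2) = (n + 1) * α ∧
      γ (n + 2) = γ 1 / γ 0 * γ (n + 1) - (n + 1) * α * γ n := by
    obtain ⟨b, hb⟩ := h.exists_sub_X_mul_eq (fun n => by rw [hlc, hlc]) n
    rw [appell_succ γ (n + 1), add_sub_cancel_left] at hb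
    obtain ⟨rfl, hc, hrec⟩ := appell_shift_coeff_relations hγ hb
    exact ⟨hc, hc ▸ hrec⟩
  refine ⟨hγ, α, -(γ 1 / γ 0), ?_, fun k => ?_⟩
  · have hα := (hstep 0).1
    rw [Nat.cast_zero, zero_add (1 : K), one_mul] at hα
    exact hα ▸ div_ne_zero (h.map_sq_ne_zero 1) (h.map_sq_ne_zero 0)
  · rcases k with _ | n
    · field_simp; simp
    · rw [(hstep n).2, add_tsub_cancel_right]
      push_cast
      ring

theorem exists_isOrthogonalSeq_appell [CharZero K] (hγ : γ 0 ≠ 0) {α β : K} (hα : α ≠ 0)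
    (hrec : ∀ k, γ (k + 1) = -β * γ k - α * k * γ (k - 1)) :
    ∃ L : K[X] →ₗ[K] K, IsOrthogonalSeq L (appell γ) :=
  exists_isOrthogonalSeq_of_X_mul_eq (degree_appell hγ) (c := fun n => α * n)
    (fun n => mul_ne_zero hα (Nat.cast_ne_zero.2 n.succ_ne_zero)) (X_mul_appell hrec)

end Hermite

/-- The sequence `P n = ∑_{k=0}^n (γ k / k!) D^k[x^n]` is an orthogonal
polynomial sequence iff the `γ k` are the Taylor coefficients (derivatives at 0) of
`z ↦ γ₀' · exp(-(α/2)z² - βz)` for some `α ≠ 0`, `γ₀' ≠ 0`. -/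
theorem stmt_0 (γ : ℕ → ℂ) (P : ℕ → Polynomial ℂ)
    (hP : ∀ n : ℕ, P n = ∑ k ∈ Finset.range (n + 1),
      Polynomial.C (γ k / (k.factorial : ℂ)) * Polynomial.derivative^[k] (Polynomial.X ^ n)) :
    (∃ L : Polynomial ℂ →ₗ[ℂ] ℂ,
        (∀ n : ℕ, (P n).degree = n) ∧
        (∀ m n : ℕ, m ≠ n → L (P m * P n) = 0) ∧
        (∀ n : ℕ, L (P n ^ 2) ≠ 0)) ↔
    (∃ α β γ₀' : ℂ, α ≠ 0 ∧ γ₀' ≠ 0 ∧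
      ∀ k : ℕ, γ k =
        iteratedDeriv k (fun z : ℂ => γ₀' * Complex.exp (-(α / 2) * z ^ 2 - β * z)) 0) := by
  obtain rfl : P = appell γ :=
    funext fun n => (hP n).trans (appell_eq_sum_iterate_derivative γ n).symm
  simp only [eq_iteratedDeriv_gaussian_iff]
  constructor
  · rintro ⟨L, hdeg, horth, hsq⟩
    obtain ⟨hγ, α, β, hα, hrec⟩ := IsOrthogonalSeq.exists_hermite_recurrence ⟨hdeg, horth, hsq⟩
    exact ⟨α, β, γ 0, hα, hγ, rfl, hrec⟩
  · rintro ⟨α, β, _, hα, hγ, rfl, hrec⟩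
    obtain ⟨L, h⟩ := exists_isOrthogonalSeq_appell hγ hα hrec
    exact ⟨L, h.degree_eq, h.map_mul_eq_zero, h.map_sq_ne_zero⟩
end

section
/- Let α, β, γ_0 ∈ ℂ with α ≠ 0 and γ_0 ≠ 0, and let γ_k be the k-th derivative at 0 of the entire function z ↦ γ_0 · exp(−(α/2)z² − βz). Define P_n(x) = Σ_{k=0}^n (γ_k/k!) D^k[x^n]. Then P_0(x) = γ_0, P_1(x) = (x − β)γ_0, and for all n ≥ 2, P_n(x) = (x − β)P_{n−1}(x) − α(n−1)P_{n−2}(x). -/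
/-!
`P n = ∑ₖ (n choose k) γₖ Xⁿ⁻ᵏ` is the Appell sequence of `γ`, so the Leibniz rule gives
`P (n+1) = X P n + Q n`, where `Q` is the Appell sequence of the shifted sequence `k ↦ γ (k+1)`.
The Gaussian `f` solves `f' = (-α z - β) f`, hence its Taylor coefficients satisfy
`γ (k+1) = -β γ k - α k γ (k-1)`. The Appell sequence is linear in the coefficients, and the one
of `k ↦ k γ (k-1)` is `n P (n-1)`, so `Q n = -β P n - α n P (n-1)`.
-/

open Polynomial Finset

open scoped ContDiff

section Appell

variable {K : Type*} [Field K]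

noncomputable def appellPoly (γ : ℕ → K) (n : ℕ) : K[X] :=
  ∑ k ∈ range (n + 1), C (γ k / (k.factorial : K)) * derivative^[k] (X ^ n)

theorem appellPoly_zero (γ : ℕ → K) : appellPoly γ 0 = C (γ 0) := by
  simp [appellPoly]

theorem appellPoly_add (γ δ : ℕ → K) (n : ℕ) :
    appellPoly (γ + δ) n = appellPoly γ n + appellPoly δ n := by
  simp only [appellPoly, Pi.add_apply, add_div, C_add, add_mul, sum_add_distrib]

theorem appellPoly_smul (a : K) (γ : ℕ → K) (n : ℕ) :
    appellPoly (a • γ) n = a • appellPoly γ n := by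
  simp only [appellPoly, smul_sum, Pi.smul_apply, smul_eq_mul, mul_div_assoc, C_mul,
    smul_eq_C_mul, mul_assoc]

theorem succ_mul_div_factorial_succ [CharZero K] (c : K) (k : ℕ) :
    (k + 1 : K) * c / ((k + 1).factorial : K) = c / (k.factorial : K) := by
  rw [Nat.factorial_succ, Nat.cast_mul]
  field_simp
  push_cast
  ring

theorem appellPoly_succ [CharZero K] (γ : ℕ → K) (n : ℕ) :
    appellPoly γ (n + 1) = X * appellPoly γ n + appellPoly (fun k => γ (k + 1)) n := by
  have htop : derivative^[n + 1] (X ^ n : K[X]) = 0 :=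
    iterate_derivative_eq_zero (by simp)
  have hleibniz : ∀ k, derivative^[k] (X ^ (n + 1) : K[X]) =
      derivative^[k] (X ^ n) * X + k • derivative^[k - 1] (X ^ n) := fun k => by
    rw [pow_succ, iterate_derivative_mul_X]
  have hshift : ∀ j, C (γ (j + 1) / ((j + 1).factorial : K)) * ((j + 1) • derivative^[j] (X ^ n))
      = C (γ (j + 1) / (j.factorial : K)) * derivative^[j] (X ^ n) := fun j => by
    rw [nsmul_eq_mul, ← C_eq_natCast, ← mul_assoc, ← C_mul, mul_comm (γ _ / _), ← mul_div_assoc,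
      Nat.cast_succ, succ_mul_div_factorial_succ]
  simp only [appellPoly, hleibniz, mul_add, sum_add_distrib]
  rw [sum_range_succ _ (n + 1), htop, sum_range_succ' (fun k => C _ * (k • _)), mul_sum]
  simp only [hshift, Nat.add_sub_cancel, zero_smul, mul_zero, zero_mul, add_zero]
  exact congrArg₂ _ (sum_congr rfl fun k _ => by ring) rfl

theorem appellPoly_natCast_mul_pred_succ [CharZero K] (γ : ℕ → K) (n : ℕ) :
    appellPoly (fun k => (k : K) * γ (k - 1)) (n + 1) = C ((n : K) + 1) * appellPoly γ n := by
  rw [appellPoly, sum_range_succ', appellPoly, mul_sum]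
  simp only [Nat.cast_zero, zero_mul, zero_div, C_0, zero_mul, add_zero, Nat.add_sub_cancel]
  refine sum_congr rfl fun j _ => ?_
  rw [Function.iterate_succ_apply, derivative_X_pow, iterate_derivative_C_mul, Nat.add_sub_cancel,
    Nat.cast_succ, succ_mul_div_factorial_succ]
  push_cast
  ring

theorem appellPoly_add_two [CharZero K] {α β : K} {γ : ℕ → K}
    (hγ : ∀ k, γ (k + 1) = -β * γ k - α * k * γ (k - 1)) (n : ℕ) :
    appellPoly γ (n + 2) =
      (X - C β) * appellPoly γ (n + 1) - C (α * (n + 1)) * appellPoly γ n := by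
  have hshift : (fun k => γ (k + 1)) = (-β) • γ + (-α) • fun k : ℕ => (k : K) * γ (k - 1) := by
    funext k
    simp only [hγ k, Pi.add_apply, Pi.smul_apply, smul_eq_mul]
    ring
  rw [appellPoly_succ, hshift, appellPoly_add, appellPoly_smul, appellPoly_smul,
    appellPoly_natCast_mul_pred_succ, smul_eq_C_mul, smul_eq_C_mul]
  simp only [C_neg, C_mul]
  ring

end Appell

section LinearODE

variable {𝕜 : Type*} [NontriviallyNormedField 𝕜]

theorem iteratedDeriv_succ_of_deriv_eq_linear_mul {f : 𝕜 → 𝕜} {a b : 𝕜} (hf : ContDiff 𝕜 ∞ f)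
    (hf' : ∀ z, deriv f z = (a * z + b) * f z) (k : ℕ) :
    iteratedDeriv (k + 1) f =
      fun z => (a * z + b) * iteratedDeriv k f z + a * k * iteratedDeriv (k - 1) f z := by
  have hderiv : ∀ j z, HasDerivAt (iteratedDeriv j f) (iteratedDeriv (j + 1) f z) z :=
    fun j z => by
      rw [iteratedDeriv_succ]
      exact (hf.differentiable_iteratedDeriv j (mod_cast ENat.natCast_lt_top j) z).hasDerivAt
  induction k with
  | zero => funext z; simp [hf']
  | succ k ih =>
    funext z
    have hlin : HasDerivAt (fun z => a * z + b) a z := by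
      simpa using ((hasDerivAt_id z).const_mul a).add_const b
    have hk : (k : 𝕜) * iteratedDeriv (k - 1 + 1) f z = k * iteratedDeriv k f z := by
      cases k <;> simp
    have hsum : HasDerivAt
        (fun z => (a * z + b) * iteratedDeriv k f z + a * k * iteratedDeriv (k - 1) f z)
        (a * iteratedDeriv k f z + (a * z + b) * iteratedDeriv (k + 1) f z +
          a * k * iteratedDeriv (k - 1 + 1) f z) z :=
      (hlin.mul (hderiv k z)).add ((hderiv (k - 1) z).const_mul (a * k))
    conv_lhs => rw [iteratedDeriv_succ, ih, hsum.deriv]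
    rw [Nat.add_sub_cancel]
    push_cast
    linear_combination a * hk

end LinearODE

theorem deriv_const_mul_cexp_quadratic (α β γ₀ z : ℂ) :
    deriv (fun z => γ₀ * Complex.exp (-(α / 2) * z ^ 2 - β * z)) z =
      (-α * z + -β) * (γ₀ * Complex.exp (-(α / 2) * z ^ 2 - β * z)) := by
  have hexponent : HasDerivAt (fun z : ℂ => -(α / 2) * z ^ 2 - β * z) (-α * z + -β) z :=
    (((hasDerivAt_pow 2 z).const_mul _).fun_sub ((hasDerivAt_id' z).const_mul β)).congr_deriv
      (by norm_num; ring)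
  rw [(hexponent.cexp.const_mul γ₀).deriv]
  ring

theorem stmt_1_general (α β γ₀ : ℂ) (γ : ℕ → ℂ)
    (hγ : ∀ k : ℕ, γ k =
      iteratedDeriv k (fun z : ℂ => γ₀ * Complex.exp (-(α / 2) * z ^ 2 - β * z)) 0)
    (P : ℕ → Polynomial ℂ)
    (hP : ∀ n : ℕ, P n = ∑ k ∈ Finset.range (n + 1),
      Polynomial.C (γ k / (k.factorial : ℂ)) * Polynomial.derivative^[k] (Polynomial.X ^ n)) :
    P 0 = Polynomial.C γ₀ ∧
    P 1 = (Polynomial.X - Polynomial.C β) * Polynomial.C γ₀ ∧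
    ∀ n : ℕ, 2 ≤ n →
      P n = (Polynomial.X - Polynomial.C β) * P (n - 1)
        - Polynomial.C (α * ((n : ℂ) - 1)) * P (n - 2) := by
  obtain rfl : P = appellPoly γ := funext hP
  have hγ_zero : γ 0 = γ₀ := by simp [hγ]
  have hγ_rec : ∀ k, γ (k + 1) = -β * γ k - α * k * γ (k - 1) := fun k => by
    have hsmooth : ContDiff ℂ ∞ fun z : ℂ => γ₀ * Complex.exp (-(α / 2) * z ^ 2 - β * z) := by
      fun_prop
    rw [hγ, iteratedDeriv_succ_of_deriv_eq_linear_mul hsmooth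
      (deriv_const_mul_cexp_quadratic α β γ₀)]
    simp only [← hγ]
    ring
  refine ⟨by rw [appellPoly_zero, hγ_zero], ?_, fun n hn => ?_⟩
  · rw [appellPoly_succ, appellPoly_zero, appellPoly_zero, hγ_rec, hγ_zero]
    simp only [Nat.cast_zero, mul_zero, zero_mul, sub_zero, C_mul, C_neg]
    ring
  · obtain ⟨m, rfl⟩ := Nat.exists_eq_add_of_le' hn
    rw [appellPoly_add_two hγ_rec, show m + 2 - 1 = m + 1 by omega, Nat.add_sub_cancel,
      show ((m + 2 : ℕ) : ℂ) - 1 = m + 1 by push_cast; ring]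

/-- If `γ k` is the k-th derivative at 0 of `z ↦ γ₀ · exp(-(α/2)z² - βz)`
and `P n = ∑_{k=0}^n (γ k / k!) D^k[x^n]`, then `P 0 = γ₀`, `P 1 = (x - β)γ₀`, and for
`n ≥ 2`, `P n = (x - β) P (n-1) - α(n-1) P (n-2)`. -/
theorem stmt_1 (α β γ₀ : ℂ) (hα : α ≠ 0) (hγ₀ : γ₀ ≠ 0) (γ : ℕ → ℂ)
    (hγ : ∀ k : ℕ, γ k =
      iteratedDeriv k (fun z : ℂ => γ₀ * Complex.exp (-(α / 2) * z ^ 2 - β * z)) 0)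
    (P : ℕ → Polynomial ℂ)
    (hP : ∀ n : ℕ, P n = ∑ k ∈ Finset.range (n + 1),
      Polynomial.C (γ k / (k.factorial : ℂ)) * Polynomial.derivative^[k] (Polynomial.X ^ n)) :
    P 0 = Polynomial.C γ₀ ∧
    P 1 = (Polynomial.X - Polynomial.C β) * Polynomial.C γ₀ ∧
    ∀ n : ℕ, 2 ≤ n →
      P n = (Polynomial.X - Polynomial.C β) * P (n - 1)
        - Polynomial.C (α * ((n : ℂ) - 1)) * P (n - 2) :=
  stmt_1_general α β γ₀ γ hγ P hP
end

section
/- Let γ : ℕ → ℂ with associated polynomials P_n(x) = Σ_{k=0}^n (γ_k/k!) D^k[x^n] for n ≥ 0, and let a, b ∈ ℂ with a ≠ 0 and γ_0 ≠ 0. Then the following are equivalent: (i) P_1(x) = (x − b)P_0(x) and, for all n ≥ 2, P_n(x) = (x − b)P_{n−1}(x) − a(n−1)P_{n−2}(x); (ii) γ_1 = −b·γ_0 and, for all n ≥ 2, γ_n = −b·γ_{n−1} − a(n−1)γ_{n−2}. -/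
open Polynomial Finset

private lemma coeff_eq (γ : ℕ → ℂ) (P : ℕ → Polynomial ℂ)
    (hP : ∀ n : ℕ, P n = ∑ k ∈ Finset.range (n + 1),
      Polynomial.C (γ k / (k.factorial : ℂ)) * Polynomial.derivative^[k] (Polynomial.X ^ n))
    (n m : ℕ) :
    (P n).coeff m = if m ≤ n then (n.choose m : ℂ) * γ (n - m) else 0 := by
  rw [hP, finset_sum_coeff]
  have hterm : ∀ k ∈ Finset.range (n + 1),
      (Polynomial.C (γ k / (k.factorial : ℂ)) * Polynomial.derivative^[k]
        (Polynomial.X ^ n)).coeff m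
      = if k = n - m ∧ m ≤ n then (n.choose m : ℂ) * γ (n - m) else 0 := by
    intro k hk
    rw [Finset.mem_range] at hk
    rw [iterate_derivative_X_pow_eq_C_mul, ← mul_assoc, ← C_mul, coeff_C_mul, coeff_X_pow]
    by_cases h : k = n - m ∧ m ≤ n
    · obtain ⟨rfl, hmn⟩ := h
      have : m = n - (n - m) := by omega
      rw [if_pos this, if_pos ⟨rfl, hmn⟩, mul_one]
      rw [Nat.descFactorial_eq_factorial_mul_choose, Nat.choose_symm hmn]
      push_cast
      field_simp [Nat.factorial_ne_zero]
    · have : ¬ (m = n - k) := by omega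
      rw [if_neg this, if_neg h, mul_zero]
  rw [Finset.sum_congr rfl hterm]
  by_cases hmn : m ≤ n
  · rw [Finset.sum_eq_single (n - m)]
    · simp [hmn]
    · intro k hk hne; simp [hne]
    · intro h; exfalso; exact h (Finset.mem_range.mpr (by omega))
  · simp [hmn]


/-- For `P n = ∑_{k=0}^n (γ k / k!) D^k[x^n]`, with `a ≠ 0` and `γ 0 ≠ 0`,
the polynomials satisfy the three-term recurrence with constant coefficients `(x-b)` and
`a(n-1)` iff the coefficients `γ` satisfy the corresponding recurrence. -/
theorem stmt_4 (γ : ℕ → ℂ) (P : ℕ → Polynomial ℂ)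
    (hP : ∀ n : ℕ, P n = ∑ k ∈ Finset.range (n + 1),
      Polynomial.C (γ k / (k.factorial : ℂ)) * Polynomial.derivative^[k] (Polynomial.X ^ n))
    (a b : ℂ) (ha : a ≠ 0) (hγ₀ : γ 0 ≠ 0) :
    (P 1 = (Polynomial.X - Polynomial.C b) * P 0 ∧
      ∀ n : ℕ, 2 ≤ n →
        P n = (Polynomial.X - Polynomial.C b) * P (n - 1)
          - Polynomial.C (a * ((n : ℂ) - 1)) * P (n - 2)) ↔
    (γ 1 = -b * γ 0 ∧
      ∀ n : ℕ, 2 ≤ n → γ n = -b * γ (n - 1) - a * ((n : ℂ) - 1) * γ (n - 2)) := by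
  have hc := coeff_eq γ P hP
  constructor
  · rintro ⟨h1, h2⟩
    constructor
    · have := congrArg (fun p => Polynomial.coeff p 0) h1
      simp only [mul_coeff_zero, coeff_sub, coeff_X_zero, coeff_C, hc] at this
      simpa using this
    · intro n hn
      have := congrArg (fun p => Polynomial.coeff p 0) (h2 n hn)
      simp only [coeff_sub, mul_coeff_zero, coeff_X_zero, coeff_C, coeff_C_mul, hc] at this
      simpa using this
  · rintro ⟨h1, h2⟩
    constructor
    · ext m
      rcases m with _ | _ | j
      · simp only [mul_coeff_zero, coeff_sub, coeff_X_zero, coeff_C, hc]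
        simp [h1]
      · simp only [sub_mul, coeff_sub, coeff_X_mul, coeff_C_mul, hc]
        simp
      · simp only [sub_mul, coeff_sub, coeff_X_mul, coeff_C_mul, hc]
        simp
    · intro n hn
      obtain ⟨N, rfl⟩ : ∃ N, n = N + 2 := ⟨n - 2, by omega⟩
      have hd1 : N + 2 - 1 = N + 1 := by omega
      have hd2 : N + 2 - 2 = N := by omega
      rw [hd1, hd2]
      ext m
      rcases m with _ | j
      · simp only [coeff_sub, mul_coeff_zero, coeff_X_zero, coeff_C, coeff_C_mul, hc]
        have := h2 (N + 2) (by omega)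
        rw [hd1, hd2] at this
        norm_num
        rw [this]
        push_cast
        ring
      · simp only [coeff_sub, sub_mul, coeff_X_mul, coeff_C_mul, hc]
        by_cases hj1 : j + 1 ≤ N
        · rw [if_pos (by omega : j + 1 ≤ N + 2), if_pos (by omega : j ≤ N + 1),
            if_pos (by omega : j + 1 ≤ N + 1), if_pos hj1]
          rw [show N + 2 - (j + 1) = N + 1 - j from by omega,
            show N + 1 - (j + 1) = N - j from by omega,
            show N - (j + 1) = N - j - 1 from by omega]
          have hrec := h2 (N + 1 - j) (by omega)
          rw [show N + 1 - j - 1 = N - j from by omega,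
            show N + 1 - j - 2 = N - j - 1 from by omega] at hrec
          have hcast : ((N + 1 - j : ℕ) : ℂ) = (N : ℂ) + 1 - (j : ℂ) := by
            push_cast [Nat.cast_sub (show j ≤ N + 1 by omega)]; ring
          rw [hcast] at hrec
          have cp : (((N + 2).choose (j + 1) : ℕ) : ℂ)
              = ((N + 1).choose j : ℕ) + ((N + 1).choose (j + 1) : ℕ) := by
            rw [show (N + 2).choose (j + 1) = (N + 1).choose j + (N + 1).choose (j + 1)
              from Nat.choose_succ_succ (N + 1) j]
            push_cast; ring
          have cfnat : (N - j) * (N + 1).choose (j + 1) = (N + 1) * N.choose (j + 1) := by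
            have h1' := Nat.add_one_mul_choose_eq N (j + 1)
            have h2' := Nat.choose_succ_right_eq (N + 1) (j + 1)
            have : N + 1 - (j + 1) = N - j := by omega
            rw [this] at h2'
            rw [h1', h2', Nat.mul_comm]
          have cf : ((N : ℂ) - (j : ℂ)) * (((N + 1).choose (j + 1) : ℕ) : ℂ)
              = ((N : ℂ) + 1) * ((N.choose (j + 1) : ℕ) : ℂ) := by
            have := congrArg (fun x : ℕ => (x : ℂ)) cfnat
            push_cast [Nat.cast_sub (show j ≤ N by omega)] at this
            linear_combination this
          push_cast
          linear_combination (((N + 1).choose (j + 1) : ℕ) : ℂ) * hrec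
            + γ (N + 1 - j) * cp - a * γ (N - j - 1) * cf
        · by_cases hj2 : j = N
          · rw [hj2]
            rw [if_pos (by omega : N + 1 ≤ N + 2), if_pos (by omega : N ≤ N + 1),
              if_pos (by omega : N + 1 ≤ N + 1), if_neg (by omega : ¬ N + 1 ≤ N)]
            rw [show N + 2 - (N + 1) = 1 from by omega, show N + 1 - N = 1 from by omega,
              show N + 1 - (N + 1) = 0 from by omega]
            rw [Nat.choose_succ_self_right, Nat.choose_succ_self_right, Nat.choose_self]
            push_cast
            linear_combination ((N : ℂ) + 2 - ((N : ℂ) + 1)) * h1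
          · by_cases hj3 : j = N + 1
            · subst hj3
              rw [if_pos (by omega : N + 1 + 1 ≤ N + 2), if_pos (by omega : N + 1 ≤ N + 1),
                if_neg (by omega : ¬ N + 1 + 1 ≤ N + 1), if_neg (by omega : ¬ N + 1 + 1 ≤ N)]
              rw [show N + 2 - (N + 1 + 1) = 0 from by omega,
                show N + 1 - (N + 1) = 0 from by omega]
              simp [Nat.choose_self]
            · rw [if_neg (by omega : ¬ j + 1 ≤ N + 2), if_neg (by omega : ¬ j ≤ N + 1),
                if_neg (by omega : ¬ j + 1 ≤ N + 1), if_neg (by omega : ¬ j + 1 ≤ N)]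
              ring
end

section
/- Let α, β ∈ ℝ with α > 0, and let T : ℝ[x] → ℝ[x] be the linear map determined by T[x^n] = H_n^α(x − β), i.e., T[p] = Σ_n c_n · H_n^α(x − β) for p(x) = Σ_n c_n x^n. If p ∈ ℝ[x] has only real roots (p splits over ℝ), then T[p] also has only real roots. -/
/-!
The recurrence gives `H_{n+1}' = (n+1) H_n`, hence `H_{n+1} = x H_n - α H_n'`. So `T(x q)` is the
image of `T q` under the raising operator `R_c q = (x - c) q - α q'` with `c = β`, and
`T((x - r) q) = R_{β+r}(T q)`; it therefore suffices that each `R_c` preserves real-rootedness.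
Up to the nonvanishing factor `-α⁻¹ e^{-(x-c)²/2α}`, `R_c q` is the derivative of
`g = e^{-(x-c)²/2α} q`. By Rolle, `R_c q` has a root strictly between any two consecutive roots of
`q`, and one beyond the largest root since `g → 0` at `+∞`; a root of `q` of multiplicity `m` is a
root of `R_c q` of multiplicity at least `m - 1`. This accounts for `deg q` real roots of `R_c q`,
which has degree `deg q + 1`, so its last root is real too.
-/

open Polynomial Finset Filter Topology

theorem exists_deriv_eq_zero_of_tendsto_atTop {f : ℝ → ℝ} {a : ℝ}
    (hf : ContinuousOn f (Set.Ici a)) (hlim : Tendsto f atTop (𝓝 (f a))) :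
    ∃ x > a, deriv f x = 0 := by
  by_cases hconst : ∀ t > a, f t = f a
  · refine ⟨a + 1, by linarith, ?_⟩
    have : f =ᶠ[𝓝 (a + 1)] fun _ => f a :=
      eventually_of_mem (Ioi_mem_nhds (by linarith)) hconst
    rw [this.deriv_eq, deriv_const]
  push Not at hconst
  obtain ⟨t, hat, hta⟩ := hconst
  wlog hlt : f a < f t generalizing f
  · have hlt' : -f a < -f t := neg_lt_neg (lt_of_le_of_ne (not_lt.mp hlt) hta)
    obtain ⟨x, hax, hx⟩ :=
      this (f := fun x => -f x) hf.neg hlim.neg (fun h => hta (neg_inj.mp h)) hlt'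
    exact ⟨x, hax, by simpa [deriv.neg'] using hx⟩
  obtain ⟨N, htN, hN⟩ :=
    ((eventually_gt_atTop t).and (hlim.eventually (gt_mem_nhds hlt))).exists
  obtain ⟨x, hx, hmax⟩ := isCompact_Icc.exists_isMaxOn (Set.nonempty_Icc.mpr (hat.trans htN).le)
    (hf.mono Set.Icc_subset_Ici_self)
  have hfx : f t ≤ f x := hmax ⟨hat.le, htN.le⟩
  have hxa : a < x := lt_of_le_of_ne hx.1 (by rintro rfl; linarith)
  have hxN : x < N := lt_of_le_of_ne hx.2 (by rintro rfl; linarith)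
  exact ⟨x, hxa, (hmax.isLocalMax (Icc_mem_nhds hxa hxN)).deriv_eq_zero⟩

namespace Polynomial

section Raising

variable {R : Type*} [CommRing R]

noncomputable def raising (a c : R) : R[X] →ₗ[R] R[X] :=
  LinearMap.mulLeft R (X - C c) - a • derivative

@[simp]
theorem raising_apply (a c : R) (q : R[X]) :
    raising a c q = (X - C c) * q - C a * derivative q := by
  simp [raising, smul_eq_C_mul]

theorem raising_add (a c r : R) (q : R[X]) :
    raising a (c + r) q = raising a c q - C r * q := by
  simp only [raising_apply, C_add]
  ring

theorem raising_zero_comp_X_sub_C (a c : R) (q : R[X]) :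
    (raising a 0 q).comp (X - C c) = raising a c (q.comp (X - C c)) := by
  simp [derivative_comp, mul_comp]

theorem natDegree_raising [Nontrivial R] (a c : R) {q : R[X]} (hq : q ≠ 0) :
    (raising a c q).natDegree = q.natDegree + 1 := by
  have hmul : ((X - C c) * q).natDegree = q.natDegree + 1 := by
    rw [(monic_X_sub_C c).natDegree_mul' hq, natDegree_X_sub_C, add_comm]
  have hlt : (C a * derivative q).natDegree < ((X - C c) * q).natDegree := by
    rw [hmul, Nat.lt_succ_iff]
    exact (natDegree_C_mul_le _ _).trans ((natDegree_derivative_le q).trans (Nat.sub_le _ _))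
  rw [raising_apply, natDegree_sub_eq_left_of_natDegree_lt hlt, hmul]

theorem raising_ne_zero [Nontrivial R] (a c : R) {q : R[X]} (hq : q ≠ 0) :
    raising a c q ≠ 0 :=
  ne_zero_of_natDegree_gt (n := 0) (by rw [natDegree_raising a c hq]; omega)

theorem rootMultiplicity_sub_one_le_rootMultiplicity_raising [IsDomain R] [CharZero R]
    (a c : R) {q : R[X]} (hq : q ≠ 0) (x : R) :
    q.rootMultiplicity x - 1 ≤ (raising a c q).rootMultiplicity x := by
  rw [le_rootMultiplicity_iff (raising_ne_zero a c hq), raising_apply]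
  have hq' : (X - C x) ^ (q.rootMultiplicity x - 1) ∣ q :=
    (pow_dvd_pow _ (Nat.sub_le _ _)).trans (q.pow_rootMultiplicity_dvd x)
  have hdq : (X - C x) ^ (q.rootMultiplicity x - 1) ∣ derivative q :=
    (pow_dvd_pow _ (q.rootMultiplicity_sub_one_le_derivative_rootMultiplicity x)).trans
      ((derivative q).pow_rootMultiplicity_dvd x)
  exact dvd_sub (hq'.mul_left _) (hdq.mul_left _)

end Raising

section Hermite

variable {R : Type*} [CommRing R] {a : R} {H : ℕ → R[X]}

theorem derivative_hermite_succ (h0 : H 0 = 1) (h1 : H 1 = X)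
    (hrec : ∀ n, H (n + 2) = X * H (n + 1) - C (a * (n + 1)) * H n) (n : ℕ) :
    derivative (H (n + 1)) = C ((n : R) + 1) * H n := by
  induction n using Nat.strong_induction_on with
  | _ n ih =>
    match n with
    | 0 => simp [h0, h1]
    | 1 =>
      rw [hrec 0, h1, h0]
      simp only [derivative_sub, derivative_mul, derivative_X, derivative_C, derivative_one]
      push_cast
      simp only [C_add, C_1]
      ring
    | m + 2 =>
      rw [hrec (m + 1), derivative_sub, derivative_mul, derivative_X, derivative_C_mul,
        ih (m + 1) (by omega), ih m (by omega), hrec m]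
      push_cast
      simp only [C_add, C_mul, C_1, map_natCast, map_ofNat]
      ring

theorem hermite_succ_eq_raising (h0 : H 0 = 1) (h1 : H 1 = X)
    (hrec : ∀ n, H (n + 2) = X * H (n + 1) - C (a * (n + 1)) * H n) (n : ℕ) :
    H (n + 1) = raising a 0 (H n) := by
  cases n with
  | zero => simp [h0, h1]
  | succ m =>
    rw [raising_apply, derivative_hermite_succ h0 h1 hrec, hrec, C_0, sub_zero, C_mul]
    ring

end Hermite

theorem card_roots_le_of_rootMultiplicity_le {R : Type*} [CommRing R] [IsDomain R]
    [DecidableEq R] {p f : R[X]} (k : ℕ)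
    (hmult : ∀ x, p.rootMultiplicity x - 1 ≤ f.rootMultiplicity x)
    (hcard : #p.roots.toFinset ≤ #(f.roots.toFinset \ p.roots.toFinset) + k) :
    p.roots.card ≤ f.roots.card + k := by
  set S := p.roots.toFinset
  set D := f.roots.toFinset \ S
  have hf : ∑ x ∈ S ∪ D, f.roots.count x = f.roots.card :=
    Multiset.sum_count_eq_card fun x hx => by simp [D, Multiset.mem_toFinset.mpr hx]
  calc p.roots.card = ∑ x ∈ S, (p.roots.count x - 1) + #S := by
        rw [card_eq_sum_ones, ← sum_add_distrib, ← Multiset.toFinset_sum_count_eq]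
        refine sum_congr rfl fun x hx => (Nat.sub_add_cancel ?_).symm
        exact Multiset.count_pos.mpr (Multiset.mem_toFinset.mp hx)
    _ ≤ ∑ x ∈ S, f.roots.count x + (∑ x ∈ D, f.roots.count x + k) := by
        simp only [count_roots]
        gcongr with x _ x hx
        · exact hmult x
        · refine hcard.trans (Nat.add_le_add_right ?_ k)
          rw [card_eq_sum_ones]
          refine sum_le_sum fun x hx => ?_
          rw [← count_roots]
          exact Multiset.count_pos.mpr (Multiset.mem_toFinset.mp (mem_sdiff.mp hx).1)
    _ = f.roots.card + k := by
        rw [← add_assoc, ← sum_union disjoint_sdiff, hf]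

theorem Splits.of_natDegree_le_card_roots_add_one {K : Type*} [Field K] {f : K[X]}
    (h : f.natDegree ≤ f.roots.card + 1) : f.Splits := by
  obtain ⟨g, hfg⟩ := prod_multiset_X_sub_C_dvd f
  rcases eq_or_ne f 0 with rfl | hf
  · exact Splits.zero
  have hg : g ≠ 0 := right_ne_zero_of_mul (hfg ▸ hf)
  have hdeg : f.natDegree = f.roots.card + g.natDegree := by
    conv_lhs => rw [hfg]
    rw [natDegree_mul (left_ne_zero_of_mul (hfg ▸ hf)) hg,
      natDegree_multiset_prod_X_sub_C_eq_card]
  rw [hfg]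
  exact (Splits.multisetProd fun q hq => by
    obtain ⟨r, -, rfl⟩ := Multiset.mem_map.mp hq; exact Splits.X_sub_C r).mul
    (Splits.of_natDegree_le_one (by omega))

section Gaussian

variable {α : ℝ} (c : ℝ) (q : ℝ[X])

theorem hasDerivAt_exp_mul_eval (hα : α ≠ 0) (x : ℝ) :
    HasDerivAt (fun y => Real.exp (-((y - c) ^ 2 / (2 * α))) * q.eval y)
      (-(Real.exp (-((x - c) ^ 2 / (2 * α))) / α) * (raising α c q).eval x) x := by
  have hsub : HasDerivAt (fun y : ℝ => y - c) 1 x := (hasDerivAt_id x).sub_const c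
  have hexp : HasDerivAt (fun y => -((y - c) ^ 2 / (2 * α))) (-((x - c) / α)) x :=
    ((hsub.pow 2).div_const (2 * α)).neg.congr_deriv (by field_simp; ring)
  refine (hexp.exp.mul (q.hasDerivAt x)).congr_deriv ?_
  simp only [raising_apply, eval_sub, eval_mul, eval_X, eval_C]
  field_simp
  ring

theorem tendsto_exp_mul_eval_atTop (hα : 0 < α) :
    Tendsto (fun x => Real.exp (-((x - c) ^ 2 / (2 * α))) * q.eval x) atTop (𝓝 0) := by
  have hexp : ∀ᶠ x in atTop, Real.exp (-((x - c) ^ 2 / (2 * α))) ≤ Real.exp (-x) := by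
    filter_upwards [eventually_ge_atTop (2 * |c|), eventually_ge_atTop (8 * α)] with x h1 h2
    rw [Real.exp_le_exp, neg_le_neg_iff, le_div_iff₀ (by positivity)]
    nlinarith [le_abs_self c, neg_abs_le c, abs_nonneg c]
  refine squeeze_zero_norm' (a := fun x => |q.eval x / Real.exp x|) ?_
    (by simpa using q.tendsto_div_exp_atTop.abs)
  filter_upwards [hexp] with x hx
  rw [Real.norm_eq_abs, abs_mul, Real.abs_exp, abs_div, Real.abs_exp, div_eq_inv_mul (|_|),
    ← Real.exp_neg]
  exact mul_le_mul_of_nonneg_right hx (abs_nonneg _)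

end Gaussian

theorem card_roots_toFinset_le_card_roots_raising_sdiff {α : ℝ} (hα : 0 < α) (c : ℝ) {q : ℝ[X]}
    (hq : q ≠ 0) :
    #q.roots.toFinset ≤ #((raising α c q).roots.toFinset \ q.roots.toFinset) := by
  set F := (raising α c q).roots.toFinset
  set S := q.roots.toFinset
  set g := fun y => Real.exp (-((y - c) ^ 2 / (2 * α))) * q.eval y
  have hg := hasDerivAt_exp_mul_eval c q hα.ne'
  have hgc : Continuous g := continuous_iff_continuousAt.mpr fun x => (hg x).continuousAt
  have hF : ∀ x, deriv g x = 0 → x ∈ F := by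
    intro x hx
    rw [(hg x).deriv] at hx
    refine Multiset.mem_toFinset.mpr ((mem_roots (raising_ne_zero α c hq)).mpr ?_)
    simpa [Real.exp_ne_zero, hα.ne'] using hx
  have hgS : ∀ x ∈ S, g x = 0 := fun x hx => by
    simp only [g, ((mem_roots hq).mp (Multiset.mem_toFinset.mp hx)).eq_zero, mul_zero]
  rcases S.eq_empty_or_nonempty with hS | hS
  · rw [hS, card_empty]
    exact Nat.zero_le _
  set b := S.max' hS
  have hinner : #S ≤ #(F.filter (· < b) \ S) + 1 := by
    refine card_le_sdiff_of_interleaved fun x hx y hy hxy _ => ?_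
    obtain ⟨z, hz, hz0⟩ := exists_deriv_eq_zero hxy hgc.continuousOn
      ((hgS x hx).trans (hgS y hy).symm)
    exact ⟨z, mem_filter.mpr ⟨hF z hz0, hz.2.trans_le (S.le_max' y hy)⟩, hz.1, hz.2⟩
  obtain ⟨z, hbz, hz0⟩ := exists_deriv_eq_zero_of_tendsto_atTop (a := b) hgc.continuousOn
    (by rw [hgS b (S.max'_mem hS)]; exact tendsto_exp_mul_eval_atTop c q hα)
  have hzS : z ∉ S := fun h => (S.le_max' z h).not_gt hbz
  calc #S ≤ #(F.filter (· < b) \ S) + 1 := hinner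
    _ = #(insert z (F.filter (· < b) \ S)) :=
        (card_insert_of_notMem (by simp [hbz.le.not_gt])).symm
    _ ≤ #(F \ S) := card_le_card (insert_subset (mem_sdiff.mpr ⟨hF z hz0, hzS⟩)
        (sdiff_subset_sdiff (filter_subset _ _) le_rfl))

theorem card_roots_le_card_roots_raising {α : ℝ} (hα : 0 < α) (c : ℝ) (q : ℝ[X]) :
    q.roots.card ≤ (raising α c q).roots.card := by
  rcases eq_or_ne q 0 with rfl | hq
  · simp
  exact card_roots_le_of_rootMultiplicity_le 0
    (rootMultiplicity_sub_one_le_rootMultiplicity_raising α c hq)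
    (card_roots_toFinset_le_card_roots_raising_sdiff hα c hq)

theorem Splits.raising {α : ℝ} (hα : 0 < α) (c : ℝ) {q : ℝ[X]} (hq : q.Splits) :
    (Polynomial.raising α c q).Splits := by
  rcases eq_or_ne q 0 with rfl | hq0
  · simp
  refine Splits.of_natDegree_le_card_roots_add_one ?_
  rw [natDegree_raising α c hq0, hq.natDegree_eq_card_roots]
  exact Nat.add_le_add_right (card_roots_le_card_roots_raising hα c q) 1

theorem Splits.apply_of_map_X_mul_eq_raising {p : ℝ[X]} (hp : p.Splits) {α β : ℝ} (hα : 0 < α)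
    {T : ℝ[X] →ₗ[ℝ] ℝ[X]} (hT1 : (T 1).Splits)
    (hTX : ∀ q, T (X * q) = Polynomial.raising α β (T q)) : (T p).Splits := by
  have hprod (s : Multiset ℝ) : (T (s.map (X - C ·)).prod).Splits := by
    induction s using Multiset.induction_on with
    | empty => simpa using hT1
    | cons r s ih =>
      rw [Multiset.map_cons, Multiset.prod_cons, sub_mul, map_sub, hTX, ← smul_eq_C_mul,
        map_smul, smul_eq_C_mul, ← raising_add]
      exact ih.raising hα _
  rw [hp.eq_prod_roots, ← smul_eq_C_mul, map_smul, smul_eq_C_mul]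
  exact (hprod _).C_mul _

end Polynomial

/-- For `α > 0` and `β ∈ ℝ`, the linear map `T` determined by
`T[x^n] = H_n^α(x - β)` (with `H` the generalized Hermite polynomials) sends every real
polynomial with only real roots to a polynomial with only real roots. -/
theorem stmt_7 (α β : ℝ) (hα : 0 < α)
    (H : ℕ → Polynomial ℝ) (hH0 : H 0 = 1) (hH1 : H 1 = Polynomial.X)
    (hH : ∀ n : ℕ, 2 ≤ n →
      H n = Polynomial.X * H (n - 1) - Polynomial.C (α * ((n : ℝ) - 1)) * H (n - 2))
    (T : Polynomial ℝ →ₗ[ℝ] Polynomial ℝ)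
    (hT : ∀ n : ℕ, T (Polynomial.X ^ n) = (H n).comp (Polynomial.X - Polynomial.C β)) :
    ∀ p : Polynomial ℝ, p.Splits → (T p).Splits := by
  have hrec (n : ℕ) : H (n + 2) = X * H (n + 1) - C (α * (n + 1)) * H n := by
    rw [hH (n + 2) (by omega)]
    push_cast
    ring_nf
  have hTX : ∀ q, T (X * q) = raising α β (T q) := by
    suffices T ∘ₗ LinearMap.mulLeft ℝ X = raising α β ∘ₗ T from LinearMap.congr_fun this
    ext n : 2
    simp only [LinearMap.comp_apply, LinearMap.mulLeft_apply, monomial_one_right_eq_X_pow,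
      ← pow_succ', hT, hermite_succ_eq_raising hH0 hH1 hrec, raising_zero_comp_X_sub_C]
  have hT1 : T 1 = 1 := by simpa [hH0] using hT 0
  exact fun p hp => hp.apply_of_map_X_mul_eq_raising hα (by rw [hT1]; exact Splits.one) hTX
end

section
/- For every n ≥ 0, Σ_{k=0}^n (p_k(x)/k!) D^k[x^n] = L_n(x) in ℚ[x], where p_k(x) = Σ_{r=0}^k Σ_{l=0}^r binom(k,r)·binom(r,l)·((−1)^r/l!) · x^r and L_n(x) = Σ_{r=0}^n binom(n,r)·((−1)^r/r!) · x^r is the n-th standard Laguerre polynomial. -/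
/-!
Since `D^k[x^n] / k! = C(n,k) x^(n-k)`, the left side is `∑_k C(n,k) x^(n-k) p_k`, and
`p_k = ∑_r C(k,r) a_r x^r` with `a_r = (-1)^r ∑_l C(r,l) / l!`. Collecting powers of `x` with
`C(n,k) C(k,r) = C(n,m) C(m,r)` for `m = n - k + r`, the coefficient of `x^m` becomes
`C(n,m) ∑_r C(m,r) a_r`, and binomial inversion turns `∑_r C(m,r) a_r` into `(-1)^m / m!`.
-/

open Polynomial Finset

theorem sum_range_neg_one_pow_mul_choose {R : Type*} [Ring R] (n : ℕ) :
    ∑ s ∈ range (n + 1), (-1 : R) ^ s * n.choose s = if n = 0 then 1 else 0 := by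
  simpa using congrArg (Int.cast : ℤ → R) (Int.alternating_sum_range_choose (n := n))

theorem sum_Ico_neg_one_pow_mul_choose_mul_choose {R : Type*} [CommRing R] {l m : ℕ}
    (hlm : l ≤ m) :
    ∑ r ∈ Ico l (m + 1), (-1 : R) ^ r * m.choose r * r.choose l
      = if l = m then (-1) ^ m else 0 := by
  have hterm : ∀ s ∈ range (m - l + 1),
      (-1 : R) ^ (l + s) * m.choose (l + s) * (l + s).choose l
        = (-1) ^ l * m.choose l * ((-1) ^ s * (m - l).choose s) := by
    intro s _
    have hc : m.choose (l + s) * (l + s).choose l = m.choose l * (m - l).choose s := by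
      rw [Nat.choose_mul (Nat.le_add_right l s), Nat.add_sub_cancel_left]
    rw [pow_add, mul_assoc _ (m.choose (l + s) : R), ← Nat.cast_mul, hc]
    push_cast
    ring
  rw [sum_Ico_eq_sum_range, Nat.succ_sub hlm, sum_congr rfl hterm, ← mul_sum,
    sum_range_neg_one_pow_mul_choose]
  rcases eq_or_lt_of_le hlm with rfl | hlt
  · simp
  · simp [hlt.ne, (Nat.sub_pos_of_lt hlt).ne']

theorem sum_range_neg_one_pow_mul_choose_mul_sum_range_choose {R : Type*} [CommRing R]
    (c : ℕ → R) (m : ℕ) :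
    ∑ r ∈ range (m + 1), (-1) ^ r * m.choose r * ∑ l ∈ range (r + 1), r.choose l * c l
      = (-1) ^ m * c m := by
  simp only [mul_sum, range_eq_Ico]
  rw [← sum_Ico_Ico_comm 0 (m + 1) fun l r => (-1 : R) ^ r * m.choose r * (r.choose l * c l)]
  calc _ = ∑ l ∈ Ico 0 (m + 1), (if l = m then (-1) ^ m else 0) * c l := by
        refine sum_congr rfl fun l hl => ?_
        rw [← sum_Ico_neg_one_pow_mul_choose_mul_choose (by simp at hl; omega), sum_mul]
        simp only [mul_assoc]
    _ = (-1) ^ m * c m := by simp [ite_mul]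

theorem Finset.sum_range_sum_range_reindex {M : Type*} [AddCommMonoid M] (f : ℕ → ℕ → M)
    (n : ℕ) :
    ∑ k ∈ range (n + 1), ∑ r ∈ range (k + 1), f k r
      = ∑ m ∈ range (n + 1), ∑ r ∈ range (m + 1), f (n - m + r) r := by
  rw [sum_sigma', sum_sigma']
  refine sum_nbij' (fun x => ⟨n - x.1 + x.2, x.2⟩) (fun y => ⟨n - y.1 + y.2, y.2⟩)
    ?_ ?_ ?_ ?_ ?_ <;>
  · rintro ⟨k, r⟩ h
    simp only [mem_sigma, mem_range] at h ⊢
    first | omega | (simp only [Sigma.mk.injEq]; omega) | (congr 1; omega)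

theorem Nat.choose_mul_choose_of_sub_add {n m r : ℕ} (hrm : r ≤ m) (hmn : m ≤ n) :
    n.choose (n - m + r) * (n - m + r).choose r = n.choose m * m.choose r := by
  rw [Nat.choose_mul (Nat.le_add_left r (n - m)), Nat.choose_mul hrm, Nat.add_sub_cancel,
    Nat.choose_symm_of_eq_add (show n - r = n - m + (m - r) by omega)]

theorem Polynomial.sum_C_choose_mul_X_pow_sub_mul_sum {R : Type*} [CommSemiring R]
    (a : ℕ → R) (n : ℕ) :
    ∑ k ∈ range (n + 1),
        C (n.choose k : R) * X ^ (n - k) * ∑ r ∈ range (k + 1), C (k.choose r * a r) * X ^ r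
      = ∑ m ∈ range (n + 1), C (n.choose m * ∑ r ∈ range (m + 1), m.choose r * a r) * X ^ m := by
  calc _ = ∑ k ∈ range (n + 1), ∑ r ∈ range (k + 1),
          C ((n.choose k * k.choose r : ℕ) * a r) * X ^ (n - k + r) := by
        refine sum_congr rfl fun k _ => ?_
        rw [mul_sum]
        refine sum_congr rfl fun r _ => ?_
        rw [pow_add]
        push_cast
        simp only [map_mul]
        ring
    _ = ∑ m ∈ range (n + 1), ∑ r ∈ range (m + 1),
          C ((n.choose m * m.choose r : ℕ) * a r) * X ^ m := by
        rw [sum_range_sum_range_reindex]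
        refine sum_congr rfl fun m hm => sum_congr rfl fun r hr => ?_
        rw [mem_range] at hm hr
        rw [Nat.choose_mul_choose_of_sub_add (by omega) (by omega),
          show n - (n - m + r) + r = m by omega]
    _ = _ := by
        refine sum_congr rfl fun m _ => ?_
        rw [← sum_mul, ← map_sum]
        push_cast
        simp only [mul_assoc, ← mul_sum]

theorem Polynomial.C_inv_factorial_mul_iterate_derivative_X_pow {K : Type*} [Field K]
    [CharZero K] (n k : ℕ) :
    C (1 / (k.factorial : K)) * derivative^[k] (X ^ n) = C (n.choose k : K) * X ^ (n - k) := by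
  rw [iterate_derivative_X_pow_eq_C_mul, ← mul_assoc, ← C_mul,
    Nat.descFactorial_eq_factorial_mul_choose, Nat.cast_mul, one_div,
    inv_mul_cancel_left₀ (by exact_mod_cast k.factorial_ne_zero)]

/-- With `p k = ∑_{r=0}^k ∑_{l=0}^r C(k,r) C(r,l) ((-1)^r / l!) x^r` and
`L n = ∑_{r=0}^n C(n,r) ((-1)^r / r!) x^r` the n-th Laguerre polynomial, one has
`∑_{k=0}^n (p k / k!) D^k[x^n] = L n` in `ℚ[x]`. -/
theorem stmt_9 (p L : ℕ → Polynomial ℚ)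
    (hp : ∀ k : ℕ, p k = ∑ r ∈ Finset.range (k + 1), ∑ l ∈ Finset.range (r + 1),
      Polynomial.C ((k.choose r : ℚ) * (r.choose l : ℚ) * ((-1) ^ r / (l.factorial : ℚ)))
        * Polynomial.X ^ r)
    (hL : ∀ n : ℕ, L n = ∑ r ∈ Finset.range (n + 1),
      Polynomial.C ((n.choose r : ℚ) * ((-1) ^ r / (r.factorial : ℚ))) * Polynomial.X ^ r) :
    ∀ n : ℕ,
      ∑ k ∈ Finset.range (n + 1),
        Polynomial.C (1 / (k.factorial : ℚ)) * p k * Polynomial.derivative^[k] (Polynomial.X ^ n)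
      = L n := by
  intro n
  set a : ℕ → ℚ := fun r =>
    (-1) ^ r * ∑ l ∈ range (r + 1), (r.choose l : ℚ) * (1 / (l.factorial : ℚ))
  have hpa : ∀ k, p k = ∑ r ∈ range (k + 1), C (k.choose r * a r) * X ^ r := by
    intro k
    rw [hp k]
    refine sum_congr rfl fun r _ => ?_
    rw [← sum_mul, ← map_sum]
    congr 2
    simp only [a, mul_sum]
    exact sum_congr rfl fun l _ => by ring
  have ha : ∀ m, ∑ r ∈ range (m + 1), m.choose r * a r = (-1) ^ m / m.factorial := by
    intro m
    rw [← mul_one_div, ← sum_range_neg_one_pow_mul_choose_mul_sum_range_choose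
      fun l => 1 / (l.factorial : ℚ)]
    exact sum_congr rfl fun r _ => by ring
  calc _ = ∑ k ∈ range (n + 1), C (n.choose k : ℚ) * X ^ (n - k) * p k :=
        sum_congr rfl fun k _ => by
          rw [mul_right_comm, C_inv_factorial_mul_iterate_derivative_X_pow]
    _ = L n := by
        simp only [hpa, sum_C_choose_mul_X_pow_sub_mul_sum, ha, hL]
end

section
/- Define polynomials p_n ∈ ℚ[x] recursively by p_0(x) = 1 and p_n(x) = L_n(x) − Σ_{k=0}^{n−1} (p_k(x)/k!) D^k[x^n] for n ≥ 1, and define a : ℕ → ℚ by a_0 = 1 and a_r = (−1)^r/r! − Σ_{k=0}^{r−1} binom(r,k)·a_k for r ≥ 1. Then for all n ≥ 0 and all 0 ≤ r ≤ n, the coefficient of x^r in p_n(x) equals binom(n,r)·a_r. -/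
/-!
Dividing by `k!`, the `k`-th derivative of `x^n` becomes `C(n,k) x^(n-k)`, so the coefficient of
`x^r` in the recursion for `p n` involves only the coefficients of the `p k` with `n - k ≤ r`.
Assuming inductively that these are `C(k,j) a_j`, the identity
`C(n, n-r+j) C(n-r+j, j) = C(n,r) C(r,j)` pulls out a common factor `C(n,r)`, and what remains is
`(-1)^r/r! - ∑_{j<r} C(r,j) a_j`, the recursion for `a r`.
-/

open Polynomial Finset

theorem Nat.choose_add_mul_choose_add (m r j : ℕ) :
    (m + r).choose (m + j) * (m + j).choose j = (m + r).choose r * r.choose j := by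
  rw [← Nat.choose_symm_add (a := m) (b := j), Nat.choose_mul (Nat.le_add_right m j),
    Nat.add_sub_cancel_left, Nat.add_sub_cancel_left, Nat.choose_symm_add]

namespace Polynomial

variable {K : Type*} [Field K] [CharZero K]

theorem C_inv_factorial_mul_iterate_derivative_X_pow_s10 (k n : ℕ) :
    C (1 / (k.factorial : K)) * derivative^[k] (X ^ n) = C (n.choose k : K) * X ^ (n - k) := by
  rw [iterate_derivative_X_pow_eq_C_mul, ← mul_assoc, ← C_mul,
    Nat.descFactorial_eq_factorial_mul_choose, Nat.cast_mul, one_div,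
    inv_mul_cancel_left₀ (Nat.cast_ne_zero.2 k.factorial_ne_zero)]

theorem coeff_C_inv_factorial_mul_mul_iterate_derivative_X_pow (q : K[X]) (k n r : ℕ) :
    (C (1 / (k.factorial : K)) * q * derivative^[k] (X ^ n)).coeff r =
      if n - k ≤ r then (n.choose k : K) * q.coeff (r - (n - k)) else 0 := by
  rw [mul_right_comm, C_inv_factorial_mul_iterate_derivative_X_pow_s10, mul_right_comm,
    coeff_mul_X_pow', coeff_C_mul]

end Polynomial

theorem coeff_sum_range_C_mul_X_pow {R : Type*} [Semiring R] (f : ℕ → R) {n r : ℕ}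
    (hr : r ≤ n) : (∑ i ∈ range (n + 1), C (f i) * X ^ i).coeff r = f r := by
  simp only [finsetSum_coeff, coeff_C_mul_X_pow, sum_ite_eq, mem_range,
    Nat.lt_succ_of_le hr, if_true]

theorem sum_range_ite_choose_mul_choose {R : Type*} [CommSemiring R] (a : ℕ → R) {n r : ℕ}
    (hr : r ≤ n) :
    ∑ k ∈ range n, (if n - k ≤ r then
        (n.choose k : R) * ((k.choose (r - (n - k)) : R) * a (r - (n - k))) else 0) =
      (n.choose r : R) * ∑ j ∈ range r, (r.choose j : R) * a j := by
  obtain ⟨m, rfl⟩ : ∃ m, n = m + r := ⟨n - r, by omega⟩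
  have hlow : ∀ k ∈ range m, ¬ m + r - k ≤ r := fun k hk => by
    rw [mem_range] at hk; omega
  rw [sum_range_add, sum_ite_of_false hlow, sum_const_zero, zero_add, mul_sum]
  refine sum_congr rfl fun j hj => ?_
  have hj : j ≤ r := (mem_range.1 hj).le
  have hdiff : m + r - (m + j) = r - j := by omega
  rw [hdiff, if_pos (Nat.sub_le r j), Nat.sub_sub_self hj, ← mul_assoc, ← mul_assoc,
    ← Nat.cast_mul, Nat.choose_add_mul_choose_add m r j, Nat.cast_mul]

/-- With `p` defined recursively by `p 0 = 1`,
`p n = L n - ∑_{k=0}^{n-1} (p k / k!) D^k[x^n]` (where `L n` is the n-th Laguerre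
polynomial), and `a` defined by `a 0 = 1`, `a r = (-1)^r/r! - ∑_{k=0}^{r-1} C(r,k) a k`,
the coefficient of `x^r` in `p n` is `C(n,r) · a r` for all `0 ≤ r ≤ n`. -/
theorem stmt_10 (L p : ℕ → Polynomial ℚ) (a : ℕ → ℚ)
    (hL : ∀ n : ℕ, L n = ∑ r ∈ Finset.range (n + 1),
      Polynomial.C ((n.choose r : ℚ) * ((-1) ^ r / (r.factorial : ℚ))) * Polynomial.X ^ r)
    (hp0 : p 0 = 1)
    (hp : ∀ n : ℕ, 1 ≤ n → p n = L n - ∑ k ∈ Finset.range n,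
      Polynomial.C (1 / (k.factorial : ℚ)) * p k * Polynomial.derivative^[k] (Polynomial.X ^ n))
    (ha0 : a 0 = 1)
    (ha : ∀ r : ℕ, 1 ≤ r →
      a r = (-1) ^ r / (r.factorial : ℚ) - ∑ k ∈ Finset.range r, (r.choose k : ℚ) * a k) :
    ∀ n r : ℕ, r ≤ n → (p n).coeff r = (n.choose r : ℚ) * a r := by
  intro n
  induction n using Nat.strong_induction_on with
  | _ n ih =>
    intro r hr
    rcases Nat.eq_zero_or_pos n with rfl | hn
    · obtain rfl := Nat.le_zero.1 hr
      simp [hp0, ha0]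
    have hterms : ∀ k ∈ range n,
        (C (1 / (k.factorial : ℚ)) * p k * derivative^[k] (X ^ n)).coeff r =
          if n - k ≤ r then
            (n.choose k : ℚ) * ((k.choose (r - (n - k)) : ℚ) * a (r - (n - k))) else 0 := by
      intro k hk
      rw [coeff_C_inv_factorial_mul_mul_iterate_derivative_X_pow]
      split_ifs
      · rw [ih k (mem_range.1 hk) _ (by omega)]
      · rfl
    rw [hp n hn, coeff_sub, hL, coeff_sum_range_C_mul_X_pow _ hr, finsetSum_coeff,
      sum_congr rfl hterms, sum_range_ite_choose_mul_choose a hr]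
    rcases Nat.eq_zero_or_pos r with rfl | hr0
    · simp [ha0]
    · rw [ha r hr0]
      ring
end

section
/- Let T : ℂ[x] → ℂ[x] be a ℂ-linear map. Then there exists a unique sequence of complex polynomials (p_k)_{k=0}^∞ such that for every f ∈ ℂ[x] and every N ≥ deg f, T[f] = Σ_{k=0}^{N} (p_k(x)/k!) · f^{(k)}(x), where f^{(k)} denotes the k-th derivative of f. -/
open Polynomial Finset

noncomputable def pseq (T : Polynomial ℂ →ₗ[ℂ] Polynomial ℂ) : ℕ → Polynomial ℂ
  | n => T (X ^ n) - ∑ k ∈ (Finset.range n).attach,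
      Polynomial.C (1 / ((k : ℕ).factorial : ℂ)) * pseq T k *
        Polynomial.derivative^[(k : ℕ)] (X ^ n)
  decreasing_by exact Finset.mem_range.mp k.2

lemma pseq_spec (T : Polynomial ℂ →ₗ[ℂ] Polynomial ℂ) (n : ℕ) :
    T (X ^ n) = ∑ k ∈ Finset.range (n + 1),
      Polynomial.C (1 / (k.factorial : ℂ)) * pseq T k * Polynomial.derivative^[k] (X ^ n) := by
  rw [Finset.sum_range_succ]
  have h : ∑ k ∈ Finset.range n,
      Polynomial.C (1 / (k.factorial : ℂ)) * pseq T k * Polynomial.derivative^[k] (X ^ n)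
      = ∑ k ∈ (Finset.range n).attach,
      Polynomial.C (1 / ((k : ℕ).factorial : ℂ)) * pseq T k *
        Polynomial.derivative^[(k : ℕ)] (X ^ n) := (Finset.sum_attach _ _).symm
  rw [h]
  have hn : Polynomial.C (1 / (n.factorial : ℂ)) * pseq T n *
      Polynomial.derivative^[n] (X ^ n) = pseq T n := by
    rw [iterate_derivative_X_pow_eq_C_mul, Nat.sub_self, pow_zero, mul_one,
      Nat.descFactorial_self]
    rw [mul_comm, ← mul_assoc, ← Polynomial.C_mul]
    rw [mul_one_div, div_self (by exact_mod_cast n.factorial_ne_zero), Polynomial.C_1, one_mul]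
  rw [hn, pseq]
  ring

lemma pseq_main (T : Polynomial ℂ →ₗ[ℂ] Polynomial ℂ) (f : Polynomial ℂ) (N : ℕ)
    (hN : f.natDegree ≤ N) :
    T f = ∑ k ∈ Finset.range (N + 1),
      Polynomial.C (1 / (k.factorial : ℂ)) * pseq T k * Polynomial.derivative^[k] f := by
  have hf : f = ∑ n ∈ Finset.range (N + 1), Polynomial.C (f.coeff n) * X ^ n := by
    conv_lhs => rw [f.as_sum_range' (N + 1) (Nat.lt_succ_of_le hN)]
    simp [Polynomial.C_mul_X_pow_eq_monomial]
  have step1 : T f = ∑ n ∈ Finset.range (N + 1), Polynomial.C (f.coeff n) *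
      ∑ k ∈ Finset.range (N + 1),
        Polynomial.C (1 / (k.factorial : ℂ)) * pseq T k * Polynomial.derivative^[k] (X ^ n) := by
    conv_lhs => rw [hf]
    rw [map_sum]
    refine Finset.sum_congr rfl fun n hn => ?_
    have hXn : T (X ^ n) = ∑ k ∈ Finset.range (N + 1),
        Polynomial.C (1 / (k.factorial : ℂ)) * pseq T k * Polynomial.derivative^[k] (X ^ n) := by
      rw [pseq_spec T n]
      refine Finset.sum_subset ?_ ?_
      · exact Finset.range_subset_range.mpr (Nat.succ_le_succ (Nat.lt_succ_iff.mp (Finset.mem_range.mp hn)))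
      · intro k _ hk
        have : (X ^ n : Polynomial ℂ).natDegree < k := by
          rw [Polynomial.natDegree_X_pow]
          exact Nat.lt_of_succ_le (Nat.le_of_not_lt fun h => hk (Finset.mem_range.mpr h))
        rw [Polynomial.iterate_derivative_eq_zero this, mul_zero]
    rw [← Polynomial.smul_eq_C_mul, map_smul, hXn, Polynomial.smul_eq_C_mul]
  rw [step1]
  simp_rw [Finset.mul_sum]
  rw [Finset.sum_comm]
  refine Finset.sum_congr rfl fun k _ => ?_
  conv_rhs => rw [hf]
  rw [Polynomial.iterate_derivative_sum, Finset.mul_sum]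
  refine Finset.sum_congr rfl fun n _ => ?_
  rw [Polynomial.iterate_derivative_C_mul]
  ring

/-- Every `ℂ`-linear map `T : ℂ[x] → ℂ[x]` has a unique representation
`T[f] = ∑_{k=0}^N (p k / k!) f^{(k)}` (valid for every `N ≥ deg f`) with complex
polynomials `p k`. -/
theorem stmt_13 (T : Polynomial ℂ →ₗ[ℂ] Polynomial ℂ) :
    ∃! p : ℕ → Polynomial ℂ,
      ∀ f : Polynomial ℂ, ∀ N : ℕ, f.natDegree ≤ N →
        T f = ∑ k ∈ Finset.range (N + 1),
          Polynomial.C (1 / (k.factorial : ℂ)) * p k * Polynomial.derivative^[k] f := by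

  refine ⟨pseq T, pseq_main T, ?_⟩
  intro p hp
  funext n
  induction n using Nat.strong_induction_on with
  | _ n ih =>
    have h1 := hp (X ^ n) n (by simp)
    have h2 := pseq_main T (X ^ n) n (by simp)
    rw [h2, Finset.sum_range_succ, Finset.sum_range_succ] at h1
    have hsum : ∑ k ∈ Finset.range n,
        Polynomial.C (1 / (k.factorial : ℂ)) * pseq T k * Polynomial.derivative^[k] (X ^ n)
        = ∑ k ∈ Finset.range n,
        Polynomial.C (1 / (k.factorial : ℂ)) * p k * Polynomial.derivative^[k] (X ^ n) :=
      Finset.sum_congr rfl fun k hk => by rw [ih k (Finset.mem_range.mp hk)]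
    rw [hsum] at h1
    have h1' := add_left_cancel h1
    have hD : Polynomial.derivative^[n] (X ^ n : Polynomial ℂ) = Polynomial.C (n.factorial : ℂ) := by
      rw [iterate_derivative_X_pow_eq_C_mul, Nat.sub_self, pow_zero, mul_one,
        Nat.descFactorial_self]
    rw [hD] at h1'
    have hb : (Polynomial.C (n.factorial : ℂ)) ≠ 0 := by
      simpa using (Nat.cast_ne_zero (R := ℂ)).mpr n.factorial_ne_zero
    have ha : (Polynomial.C (1 / (n.factorial : ℂ))) ≠ 0 := by
      simp [Nat.factorial_ne_zero]
    exact (mul_left_cancel₀ ha (mul_right_cancel₀ hb h1')).symm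
end
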